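/- arXiv:1606.06648 — 4 statements merged into one kernel-verified Lean document; each statement's English description precedes it below -/
import Mathlib

section
/- If (r,s) is a best rank-one approximation of a real p×q matrix R with r⊗s ≠ 0, then (r,s) maximizes the normalized correlation with R: for all u ∈ ℝ^p, v ∈ ℝ^q with u⊗v ≠ 0, one has ⟨R, u⊗v⟩_F / ‖u⊗v‖_F ≤ ⟨R, r⊗s⟩_F / ‖r⊗s‖_F. -/
/-!
Only the closure of the rank-one matrices under scaling matters. Optimality of `r ⊗ s` along
the line through itself forces `⟨R, r⊗s⟩ = ‖r⊗s‖²`, hence `‖R - r⊗s‖² = ‖R‖² - ‖r⊗s‖²`.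
Comparing with the best multiple of `u ⊗ v` gives `⟨R, u⊗v⟩² ≤ ‖r⊗s‖² ‖u⊗v‖²`, so the
normalized correlation of `u ⊗ v` is at most `‖r⊗s‖ = ⟨R, r⊗s⟩ / ‖r⊗s‖`.
-/

open Matrix Filter Topology

noncomputable section

/-- The Frobenius inner product `⟨A,B⟩_F = trace(Aᵀ B)` on real `p × q` matrices. -/
def frobInner {p q : ℕ} (A B : Matrix (Fin p) (Fin q) ℝ) : ℝ := (Aᵀ * B).trace

/-- The Frobenius norm. -/
def frobNorm {p q : ℕ} (A : Matrix (Fin p) (Fin q) ℝ) : ℝ := Real.sqrt (frobInner A A)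

/-- The rank-one matrix `r ⊗ s` with entries `(r ⊗ s)_{ij} = r i * s j`. -/
def tensor {p q : ℕ} (r : EuclideanSpace ℝ (Fin p)) (s : EuclideanSpace ℝ (Fin q)) :
    Matrix (Fin p) (Fin q) ℝ := Matrix.of fun i j => r i * s j

open scoped RealInnerProductSpace

section

variable {E : Type*} [SeminormedAddCommGroup E] [InnerProductSpace ℝ E]

lemma inner_sq_le_of_forall_le_norm_sub_smul {R y : E} {d : ℝ} (hd : 0 ≤ d)
    (h : ∀ t : ℝ, d ≤ ‖R - t • y‖) : ⟪R, y⟫ ^ 2 ≤ (‖R‖ ^ 2 - d ^ 2) * ‖y‖ ^ 2 := by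
  have hquad (t : ℝ) : d ^ 2 ≤ ‖R‖ ^ 2 - 2 * t * ⟪R, y⟫ + t ^ 2 * ‖y‖ ^ 2 := by
    have := pow_le_pow_left₀ hd (h t) 2
    rwa [norm_sub_sq_real, real_inner_smul_right, norm_smul, Real.norm_eq_abs, mul_pow, sq_abs,
      ← mul_assoc] at this
  rcases (norm_nonneg y).eq_or_lt with hy | hy
  · have : ⟪R, y⟫ = 0 := by
      simpa [← hy] using abs_real_inner_le_norm R y
    simp [this, ← hy]
  · have := hquad (⟪R, y⟫ / ‖y‖ ^ 2)
    field_simp at this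
    nlinarith

lemma inner_eq_norm_sq_of_forall_norm_sub_le_norm_sub_smul {R x : E}
    (h : ∀ t : ℝ, ‖R - x‖ ≤ ‖R - t • x‖) : ⟪R, x⟫ = ‖x‖ ^ 2 := by
  have := inner_sq_le_of_forall_le_norm_sub_smul (norm_nonneg _) h
  rw [norm_sub_sq_real] at this
  nlinarith [sq_nonneg (⟪R, x⟫ - ‖x‖ ^ 2)]

theorem inner_div_norm_le_of_isMinOn {S : Set E} (hS : ∀ y ∈ S, ∀ t : ℝ, t • y ∈ S) {R x y : E}
    (hx : x ∈ S) (hmin : IsMinOn (fun y => ‖R - y‖) S x) (hy : y ∈ S) :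
    ⟪R, y⟫ / ‖y‖ ≤ ⟪R, x⟫ / ‖x‖ := by
  have hxline (t : ℝ) : ‖R - x‖ ≤ ‖R - t • x‖ := hmin (hS x hx t)
  have hyline (t : ℝ) : ‖R - x‖ ≤ ‖R - t • y‖ := hmin (hS y hy t)
  have hRx := inner_eq_norm_sq_of_forall_norm_sub_le_norm_sub_smul hxline
  have hRy := inner_sq_le_of_forall_le_norm_sub_smul (norm_nonneg _) hyline
  rw [norm_sub_sq_real, hRx] at hRy
  -- `‖x‖ * ‖x‖ / ‖x‖ = ‖x‖` holds also for `‖x‖ = 0`, as `0 / 0 = 0`.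
  rw [hRx, sq, mul_self_div_self]
  refine div_le_of_le_mul₀ (norm_nonneg y) (norm_nonneg x) (le_of_sq_le_sq ?_ (by positivity))
  linarith

end

def frobVec {m n : Type*} (A : Matrix m n ℝ) : EuclideanSpace ℝ (m × n) :=
  WithLp.toLp 2 fun ij => A ij.1 ij.2

lemma frobVec_sub {m n : Type*} (A B : Matrix m n ℝ) : frobVec (A - B) = frobVec A - frobVec B :=
  rfl

lemma inner_frobVec {p q : ℕ} (A B : Matrix (Fin p) (Fin q) ℝ) :
    ⟪frobVec A, frobVec B⟫ = frobInner A B := by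
  simp only [frobVec, frobInner, PiLp.inner_apply, Fintype.sum_prod_type, trace, diag, mul_apply,
    transpose_apply, RCLike.inner_apply, conj_trivial]
  rw [Finset.sum_comm]
  simp_rw [mul_comm]

lemma norm_frobVec {p q : ℕ} (A : Matrix (Fin p) (Fin q) ℝ) : ‖frobVec A‖ = frobNorm A := by
  rw [norm_eq_sqrt_real_inner, inner_frobVec, frobNorm]

lemma frobVec_tensor_smul_left {p q : ℕ} (t : ℝ) (u : EuclideanSpace ℝ (Fin p))
    (v : EuclideanSpace ℝ (Fin q)) : frobVec (tensor (t • u) v) = t • frobVec (tensor u v) := by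
  ext ij
  simp [frobVec, tensor, mul_assoc]

theorem stmt_3_general {p q : ℕ} (R : Matrix (Fin p) (Fin q) ℝ)
    (r : EuclideanSpace ℝ (Fin p)) (s : EuclideanSpace ℝ (Fin q))
    (hbest : ∀ (u : EuclideanSpace ℝ (Fin p)) (v : EuclideanSpace ℝ (Fin q)),
      frobNorm (R - tensor r s) ≤ frobNorm (R - tensor u v)) :
    ∀ (u : EuclideanSpace ℝ (Fin p)) (v : EuclideanSpace ℝ (Fin q)), tensor u v ≠ 0 →
      frobInner R (tensor u v) / frobNorm (tensor u v)
        ≤ frobInner R (tensor r s) / frobNorm (tensor r s) := by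
  intro u v _
  let S : Set (EuclideanSpace ℝ (Fin p × Fin q)) := {w | ∃ u v, frobVec (tensor u v) = w}
  have hS : ∀ w ∈ S, ∀ t : ℝ, t • w ∈ S := by
    rintro _ ⟨u, v, rfl⟩ t
    exact ⟨t • u, v, frobVec_tensor_smul_left t u v⟩
  have hmin : IsMinOn (fun w => ‖frobVec R - w‖) S (frobVec (tensor r s)) := by
    rw [isMinOn_iff]
    rintro _ ⟨u, v, rfl⟩
    simpa only [← frobVec_sub, norm_frobVec] using hbest u v
  simpa only [inner_frobVec, norm_frobVec] using
    inner_div_norm_le_of_isMinOn hS ⟨r, s, rfl⟩ hmin ⟨u, v, rfl⟩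

/-- A best rank-one approximation `(r,s)` of `R` with `r⊗s ≠ 0` maximizes the
normalized correlation with `R`. -/
theorem stmt_3 {p q : ℕ} (hp : 1 ≤ p) (hq : 1 ≤ q) (R : Matrix (Fin p) (Fin q) ℝ)
    (r : EuclideanSpace ℝ (Fin p)) (s : EuclideanSpace ℝ (Fin q))
    (hbest : ∀ (u : EuclideanSpace ℝ (Fin p)) (v : EuclideanSpace ℝ (Fin q)),
      frobNorm (R - tensor r s) ≤ frobNorm (R - tensor u v))
    (hne : tensor r s ≠ 0) :
    ∀ (u : EuclideanSpace ℝ (Fin p)) (v : EuclideanSpace ℝ (Fin q)), tensor u v ≠ 0 →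
      frobInner R (tensor u v) / frobNorm (tensor u v)
        ≤ frobInner R (tensor r s) / frobNorm (tensor r s) :=
  stmt_3_general R r s hbest

end
end

section
/- If (r,s) is a best rank-one approximation of a real p×q matrix R, then the injective norm of the residual is bounded by the norm of the extracted rank-one term: for all nonzero u ∈ ℝ^p and v ∈ ℝ^q, ⟨R − r⊗s, u⊗v⟩_F / (‖u‖‖v‖) ≤ ‖r⊗s‖_F. -/
open Matrix Filter Topology

noncomputable section

/-!
Write `E = R - r ⊗ s`. Minimality of `r ⊗ s` along the lines `(r + t w) ⊗ s` and `r ⊗ (s + t w)`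
makes `E` orthogonal to every `w ⊗ s` and every `r ⊗ w`; in particular
`‖E‖² = ‖R‖² - ‖r ⊗ s‖²`. Comparing with the competitors `(t a) ⊗ b`, the quadratic
`t ↦ ‖R - t (a ⊗ b)‖² - ‖E‖²` is nonnegative, and its discriminant gives
`⟨R, a ⊗ b⟩ ≤ ‖r ⊗ s‖ ‖a‖ ‖b‖`. Finally, split `u = a + c r` and `v = b + d s` with `a ⊥ r`,
`b ⊥ s`: the orthogonality relations leave `⟨E, u ⊗ v⟩ = ⟨R, a ⊗ b⟩`, and `‖a‖ ≤ ‖u‖`,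
`‖b‖ ≤ ‖v‖`. Only the bilinearity of `⊗` and `⟨a ⊗ b, u ⊗ v⟩ = ⟨a, u⟩ ⟨b, v⟩` are used.
-/

open scoped RealInnerProductSpace

section InnerProductSpace

variable {F : Type*} [NormedAddCommGroup F] [InnerProductSpace ℝ F]

theorem sq_inner_le_of_forall_norm_sq_sub_le {x y : F} {δ : ℝ}
    (h : ∀ t : ℝ, ‖x‖ ^ 2 - δ ≤ ‖x - t • y‖ ^ 2) : ⟪x, y⟫ ^ 2 ≤ δ * ‖y‖ ^ 2 := by
  have hquad : ∀ t : ℝ, 0 ≤ ‖y‖ ^ 2 * (t * t) + (-2 * ⟪x, y⟫) * t + δ := by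
    intro t
    have ht := h t
    rw [norm_sub_sq_real, inner_smul_right, norm_smul, mul_pow, Real.norm_eq_abs, sq_abs] at ht
    nlinarith
  have := discrim_le_zero hquad
  rw [discrim] at this
  nlinarith

theorem inner_eq_zero_of_forall_norm_le_norm_sub_smul {x y : F}
    (h : ∀ t : ℝ, ‖x‖ ≤ ‖x - t • y‖) : ⟪x, y⟫ = 0 := by
  have hsq : ⟪x, y⟫ ^ 2 ≤ 0 * ‖y‖ ^ 2 :=
    sq_inner_le_of_forall_norm_sq_sub_le fun t => by
      rw [sub_zero]; exact pow_le_pow_left₀ (norm_nonneg x) (h t) 2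
  nlinarith [sq_nonneg ⟪x, y⟫]

theorem exists_eq_add_smul_inner_eq_zero_norm_le (r u : F) :
    ∃ (a : F) (c : ℝ), u = a + c • r ∧ ⟪r, a⟫ = 0 ∧ ‖a‖ ≤ ‖u‖ := by
  set K := (ℝ ∙ r)ᗮ
  have hmem : u - K.starProjection u ∈ ℝ ∙ r := by
    simpa only [K, Submodule.orthogonal_orthogonal] using K.sub_starProjection_mem_orthogonal u
  obtain ⟨c, hc⟩ := Submodule.mem_span_singleton.1 hmem
  refine ⟨K.starProjection u, c, by rw [hc]; abel, ?_, K.norm_starProjection_apply_le u⟩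
  exact Submodule.mem_orthogonal_singleton_iff_inner_right.1 (K.starProjection_apply_mem u)

end InnerProductSpace

section RankOne

variable {E₁ E₂ F : Type*} [NormedAddCommGroup E₁] [InnerProductSpace ℝ E₁]
  [NormedAddCommGroup E₂] [InnerProductSpace ℝ E₂] [NormedAddCommGroup F] [InnerProductSpace ℝ F]

/-- `B u v` stands for `u ⊗ v`. -/
def IsBestRankOneApprox (B : E₁ →ₗ[ℝ] E₂ →ₗ[ℝ] F) (R : F) (r : E₁) (s : E₂) : Prop :=
  ∀ u v, ‖R - B r s‖ ≤ ‖R - B u v‖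

theorem norm_apply_apply_of_inner_apply_apply {B : E₁ →ₗ[ℝ] E₂ →ₗ[ℝ] F}
    (hB : ∀ a b u v, ⟪B a b, B u v⟫ = ⟪a, u⟫ * ⟪b, v⟫) (a : E₁) (b : E₂) :
    ‖B a b‖ = ‖a‖ * ‖b‖ := by
  have hsq := hB a b a b
  simp only [real_inner_self_eq_norm_sq, ← mul_pow] at hsq
  exact (pow_left_inj₀ (norm_nonneg _) (by positivity) two_ne_zero).1 hsq

namespace IsBestRankOneApprox

variable {B : E₁ →ₗ[ℝ] E₂ →ₗ[ℝ] F} {R : F} {r : E₁} {s : E₂}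

theorem inner_sub_apply_left_eq_zero (h : IsBestRankOneApprox B R r s) (w : E₁) :
    ⟪R - B r s, B w s⟫ = 0 :=
  inner_eq_zero_of_forall_norm_le_norm_sub_smul fun t => by
    simpa only [sub_sub, map_add, map_smul, LinearMap.add_apply, LinearMap.smul_apply] using
      h (r + t • w) s

theorem inner_sub_apply_right_eq_zero (h : IsBestRankOneApprox B R r s) (w : E₂) :
    ⟪R - B r s, B r w⟫ = 0 :=
  inner_eq_zero_of_forall_norm_le_norm_sub_smul fun t => by
    simpa only [sub_sub, map_add, map_smul] using h r (s + t • w)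

theorem norm_sub_sq (h : IsBestRankOneApprox B R r s) :
    ‖R - B r s‖ ^ 2 = ‖R‖ ^ 2 - ‖B r s‖ ^ 2 := by
  have := norm_add_sq_eq_norm_sq_add_norm_sq_real (h.inner_sub_apply_left_eq_zero r)
  rw [sub_add_cancel] at this
  linarith

theorem inner_apply_le (h : IsBestRankOneApprox B R r s) (a : E₁) (b : E₂) :
    ⟪R, B a b⟫ ≤ ‖B r s‖ * ‖B a b‖ := by
  have hsq : ⟪R, B a b⟫ ^ 2 ≤ (‖B r s‖ * ‖B a b‖) ^ 2 := by
    rw [mul_pow]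
    refine sq_inner_le_of_forall_norm_sq_sub_le fun t => ?_
    rw [← h.norm_sub_sq, ← LinearMap.map_smul₂]
    exact pow_le_pow_left₀ (norm_nonneg _) (h (t • a) b) 2
  exact le_of_sq_le_sq hsq (by positivity)

theorem inner_sub_apply_le (h : IsBestRankOneApprox B R r s)
    (hB : ∀ a b u v, ⟪B a b, B u v⟫ = ⟪a, u⟫ * ⟪b, v⟫) (u : E₁) (v : E₂) :
    ⟪R - B r s, B u v⟫ ≤ ‖B r s‖ * (‖u‖ * ‖v‖) := by
  obtain ⟨a, c, rfl, hra, hau⟩ := exists_eq_add_smul_inner_eq_zero_norm_le r u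
  obtain ⟨b, d, rfl, hsb, hbv⟩ := exists_eq_add_smul_inner_eq_zero_norm_le s v
  have hreduce : ⟪R - B r s, B (a + c • r) (b + d • s)⟫ = ⟪R, B a b⟫ := by
    simp only [map_add, map_smul, LinearMap.add_apply, LinearMap.smul_apply, inner_add_right,
      inner_smul_right, h.inner_sub_apply_left_eq_zero, h.inner_sub_apply_right_eq_zero]
    rw [inner_sub_left, hB, hra]
    ring
  calc ⟪R - B r s, B (a + c • r) (b + d • s)⟫ = ⟪R, B a b⟫ := hreduce
    _ ≤ ‖B r s‖ * (‖a‖ * ‖b‖) := by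
      rw [← norm_apply_apply_of_inner_apply_apply hB]; exact h.inner_apply_le a b
    _ ≤ ‖B r s‖ * (‖a + c • r‖ * ‖b + d • s‖) := by gcongr

end IsBestRankOneApprox

end RankOne

section Matrix

variable {p q : ℕ}

def frobeniusVec : Matrix (Fin p) (Fin q) ℝ →ₗ[ℝ] EuclideanSpace ℝ (Fin p × Fin q) where
  toFun A := WithLp.toLp 2 fun ij => A ij.1 ij.2
  map_add' _ _ := rfl
  map_smul' _ _ := rfl

@[simp]
theorem frobeniusVec_apply (A : Matrix (Fin p) (Fin q) ℝ) (ij : Fin p × Fin q) :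
    frobeniusVec A ij = A ij.1 ij.2 := rfl

theorem frobInner_eq_inner (A B : Matrix (Fin p) (Fin q) ℝ) :
    frobInner A B = ⟪frobeniusVec A, frobeniusVec B⟫ := by
  simp only [frobInner, trace, diag_apply, Matrix.mul_apply, transpose_apply, PiLp.inner_apply,
    frobeniusVec_apply, RCLike.inner_apply, Real.ringHom_apply, Fintype.sum_prod_type]
  rw [Finset.sum_comm]
  simp only [mul_comm]

theorem frobNorm_eq_norm (A : Matrix (Fin p) (Fin q) ℝ) : frobNorm A = ‖frobeniusVec A‖ := by
  rw [frobNorm, frobInner_eq_inner, real_inner_self_eq_norm_sq, Real.sqrt_sq (norm_nonneg _)]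

def tensorVec :
    EuclideanSpace ℝ (Fin p) →ₗ[ℝ] EuclideanSpace ℝ (Fin q) →ₗ[ℝ] EuclideanSpace ℝ (Fin p × Fin q) :=
  LinearMap.mk₂ ℝ (fun u v => frobeniusVec (tensor u v))
    (fun _ _ _ => by ext; simp [tensor, add_mul])
    (fun _ _ _ => by ext; simp [tensor, mul_assoc])
    (fun _ _ _ => by ext; simp [tensor, mul_add])
    (fun _ _ _ => by ext; simp [tensor, mul_left_comm])

theorem frobeniusVec_tensor (u : EuclideanSpace ℝ (Fin p)) (v : EuclideanSpace ℝ (Fin q)) :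
    frobeniusVec (tensor u v) = tensorVec u v := rfl

theorem inner_tensorVec (a : EuclideanSpace ℝ (Fin p)) (b : EuclideanSpace ℝ (Fin q))
    (u : EuclideanSpace ℝ (Fin p)) (v : EuclideanSpace ℝ (Fin q)) :
    ⟪tensorVec a b, tensorVec u v⟫ = ⟪a, u⟫ * ⟪b, v⟫ := by
  simp only [tensorVec, tensor, LinearMap.mk₂_apply, PiLp.inner_apply, frobeniusVec_apply, of_apply,
    RCLike.inner_apply, Real.ringHom_apply, Fintype.sum_prod_type, Finset.sum_mul_sum]
  exact Finset.sum_congr rfl fun i _ => Finset.sum_congr rfl fun j _ => by ring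

end Matrix

theorem stmt_4_general {p q : ℕ} (R : Matrix (Fin p) (Fin q) ℝ)
    (r : EuclideanSpace ℝ (Fin p)) (s : EuclideanSpace ℝ (Fin q))
    (hbest : ∀ (u : EuclideanSpace ℝ (Fin p)) (v : EuclideanSpace ℝ (Fin q)),
      frobNorm (R - tensor r s) ≤ frobNorm (R - tensor u v)) :
    ∀ (u : EuclideanSpace ℝ (Fin p)) (v : EuclideanSpace ℝ (Fin q)), u ≠ 0 → v ≠ 0 →
      frobInner (R - tensor r s) (tensor u v) / (‖u‖ * ‖v‖) ≤ frobNorm (tensor r s) := by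
  intro u v hu hv
  have hbest' : IsBestRankOneApprox tensorVec (frobeniusVec R) r s := fun u v => by
    simpa only [frobNorm_eq_norm, map_sub, frobeniusVec_tensor] using hbest u v
  rw [div_le_iff₀ (mul_pos (norm_pos_iff.2 hu) (norm_pos_iff.2 hv)), frobInner_eq_inner,
    frobNorm_eq_norm, map_sub, frobeniusVec_tensor, frobeniusVec_tensor]
  exact hbest'.inner_sub_apply_le inner_tensorVec u v

/-- If `(r,s)` is a best rank-one approximation of `R`, the injective norm of the
residual is bounded by `‖r⊗s‖_F`. -/
theorem stmt_4 {p q : ℕ} (hp : 1 ≤ p) (hq : 1 ≤ q) (R : Matrix (Fin p) (Fin q) ℝ)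
    (r : EuclideanSpace ℝ (Fin p)) (s : EuclideanSpace ℝ (Fin q))
    (hbest : ∀ (u : EuclideanSpace ℝ (Fin p)) (v : EuclideanSpace ℝ (Fin q)),
      frobNorm (R - tensor r s) ≤ frobNorm (R - tensor u v)) :
    ∀ (u : EuclideanSpace ℝ (Fin p)) (v : EuclideanSpace ℝ (Fin q)), u ≠ 0 → v ≠ 0 →
      frobInner (R - tensor r s) (tensor u v) / (‖u‖ * ‖v‖) ≤ frobNorm (tensor r s) :=
  stmt_4_general R r s hbest

end
end

section
/- Convergence of the fixed-point PGD algorithm (Proposition 2, case (A1), discretized setting): assume 3Mκ < 1. Then there is a unique f ∈ H with f + Ã(f) = b, and every fixed-point PGD sequence (f_n) with f₀ = g₀ converges to f in the Frobenius norm. -/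
open Matrix Filter Topology

noncomputable section

/-- The tensorized operator `Ã(g) = Σ_{μ} A_μ g B_μᵀ`. -/
def Atil {p q M : ℕ} (A : Fin M → Matrix (Fin p) (Fin p) ℝ)
    (B : Fin M → Matrix (Fin q) (Fin q) ℝ)
    (g : Matrix (Fin p) (Fin q) ℝ) : Matrix (Fin p) (Fin q) ℝ :=
  ∑ μ, A μ * g * (B μ)ᵀ

/-!
Measure the residual `Rₙ = b - fₙ - Ã(fₙ)` in the nuclear norm `‖·‖_*`, the dual of the operator
norm under the Frobenius pairing. A best rank-one approximation `t` of `R` is a leading singular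
term, so `‖R - t‖_* ≤ ‖R‖_* - ‖t‖_F` and `‖R‖_* ≤ q ‖t‖_F`; each `A_μ t B_μᵀ` is again rank one,
so `‖Ã(t)‖_* ≤ Mκ ‖t‖_F`. As `Rₙ₊₁ = Rₙ - tₙ - Ã(tₙ)`, the nuclear norm of the residual decays
geometrically with ratio `1 - (1 - Mκ)/q`. Finally `(1 - Mκ) ‖g‖_F ≤ ‖g + Ã(g)‖_F`, which makes
`g ↦ g + Ã(g)` invertible and gives `(1 - Mκ) ‖fₙ - f‖_F ≤ ‖Rₙ‖_F ≤ ‖Rₙ‖_*`.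
-/

namespace PGD

section Frobenius

variable {p q : ℕ}

def frobL2 : Matrix (Fin p) (Fin q) ℝ →ₗ[ℝ] PiLp 2 (fun _ : Fin p => EuclideanSpace ℝ (Fin q)) where
  toFun A := WithLp.toLp 2 fun i => WithLp.toLp 2 (A i)
  map_add' _ _ := rfl
  map_smul' _ _ := rfl

@[simp]
lemma frobL2_apply_apply (A : Matrix (Fin p) (Fin q) ℝ) (i : Fin p) (j : Fin q) :
    frobL2 A i j = A i j := rfl

lemma frobL2_injective : Function.Injective (frobL2 (p := p) (q := q)) := by
  intro A B h
  ext i j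
  simpa using congr($h i j)

lemma frobInner_eq_inner (A B : Matrix (Fin p) (Fin q) ℝ) :
    frobInner A B = inner ℝ (frobL2 A) (frobL2 B) := by
  simp only [frobInner, trace, diag, mul_apply, transpose_apply, PiLp.inner_apply,
    frobL2_apply_apply, RCLike.inner_apply, conj_trivial]
  rw [Finset.sum_comm]
  simp [mul_comm]

lemma frobNorm_eq_norm (A : Matrix (Fin p) (Fin q) ℝ) : frobNorm A = ‖frobL2 A‖ := by
  rw [frobNorm, frobInner_eq_inner, real_inner_self_eq_norm_sq, Real.sqrt_sq (norm_nonneg _)]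

lemma frobNorm_nonneg (A : Matrix (Fin p) (Fin q) ℝ) : 0 ≤ frobNorm A := Real.sqrt_nonneg _

lemma frobNorm_sq (A : Matrix (Fin p) (Fin q) ℝ) : frobNorm A ^ 2 = frobInner A A := by
  rw [frobNorm_eq_norm, frobInner_eq_inner, real_inner_self_eq_norm_sq]

lemma frobNorm_eq_zero {A : Matrix (Fin p) (Fin q) ℝ} : frobNorm A = 0 ↔ A = 0 := by
  rw [frobNorm_eq_norm, norm_eq_zero, ← map_zero frobL2, frobL2_injective.eq_iff]

lemma frobInner_le_frobNorm_mul (A B : Matrix (Fin p) (Fin q) ℝ) :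
    frobInner A B ≤ frobNorm A * frobNorm B := by
  rw [frobInner_eq_inner, frobNorm_eq_norm, frobNorm_eq_norm]
  exact real_inner_le_norm _ _

lemma frobNorm_add_le (A B : Matrix (Fin p) (Fin q) ℝ) :
    frobNorm (A + B) ≤ frobNorm A + frobNorm B := by
  simp only [frobNorm_eq_norm, map_add]
  exact norm_add_le _ _

lemma frobNorm_sum_le {ι : Type*} (t : Finset ι) (F : ι → Matrix (Fin p) (Fin q) ℝ) :
    frobNorm (∑ i ∈ t, F i) ≤ ∑ i ∈ t, frobNorm (F i) := by
  simp only [frobNorm_eq_norm, map_sum]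
  exact norm_sum_le _ _

lemma frobNorm_neg (A : Matrix (Fin p) (Fin q) ℝ) : frobNorm (-A) = frobNorm A := by
  simp only [frobNorm_eq_norm, map_neg, norm_neg]

lemma frobNorm_smul (c : ℝ) (A : Matrix (Fin p) (Fin q) ℝ) :
    frobNorm (c • A) = |c| * frobNorm A := by
  simp only [frobNorm_eq_norm, map_smul, norm_smul, Real.norm_eq_abs]

lemma frobInner_comm (A B : Matrix (Fin p) (Fin q) ℝ) : frobInner A B = frobInner B A := by
  simp only [frobInner_eq_inner, real_inner_comm]

lemma frobInner_sub_left (A B C : Matrix (Fin p) (Fin q) ℝ) :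
    frobInner (A - B) C = frobInner A C - frobInner B C := by
  simp only [frobInner_eq_inner, map_sub, inner_sub_left]

lemma frobInner_add_right (A B C : Matrix (Fin p) (Fin q) ℝ) :
    frobInner A (B + C) = frobInner A B + frobInner A C := by
  simp only [frobInner_eq_inner, map_add, inner_add_right]

lemma frobInner_neg_right (A B : Matrix (Fin p) (Fin q) ℝ) :
    frobInner A (-B) = -frobInner A B := by
  simp only [frobInner_eq_inner, map_neg, inner_neg_right]

lemma frobInner_smul_right (c : ℝ) (A B : Matrix (Fin p) (Fin q) ℝ) :
    frobInner A (c • B) = c * frobInner A B := by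
  simp only [frobInner_eq_inner, map_smul, real_inner_smul_right]

lemma frobInner_sum_left {ι : Type*} (t : Finset ι) (F : ι → Matrix (Fin p) (Fin q) ℝ)
    (B : Matrix (Fin p) (Fin q) ℝ) :
    frobInner (∑ i ∈ t, F i) B = ∑ i ∈ t, frobInner (F i) B := by
  simp only [frobInner_eq_inner, map_sum, sum_inner]

lemma frobNorm_sub_sq (A B : Matrix (Fin p) (Fin q) ℝ) :
    frobNorm (A - B) ^ 2 = frobNorm A ^ 2 - 2 * frobInner A B + frobNorm B ^ 2 := by
  simp only [frobNorm_eq_norm, frobInner_eq_inner, map_sub, norm_sub_sq_real]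

lemma frobNorm_transpose (A : Matrix (Fin p) (Fin q) ℝ) : frobNorm Aᵀ = frobNorm A := by
  rw [frobNorm, frobNorm, frobInner, frobInner, transpose_transpose, trace_mul_comm]

lemma frobInner_mul_mul (X W : Matrix (Fin p) (Fin q) ℝ) (P : Matrix (Fin p) (Fin p) ℝ)
    (Q : Matrix (Fin q) (Fin q) ℝ) :
    frobInner X (P * W * Q) = frobInner (Pᵀ * X * Qᵀ) W := by
  simp only [frobInner, transpose_mul, transpose_transpose, Matrix.mul_assoc]
  rw [trace_mul_comm Q, Matrix.mul_assoc, Matrix.mul_assoc]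

lemma frobInner_vecMulVec (X : Matrix (Fin p) (Fin q) ℝ) (u : Fin p → ℝ) (v : Fin q → ℝ) :
    frobInner X (vecMulVec u v) = u ⬝ᵥ X *ᵥ v := by
  rw [frobInner, mul_vecMulVec, trace_vecMulVec, mulVec_transpose, dotProduct_mulVec]

lemma frobNorm_vecMulVec_sq (u : Fin p → ℝ) (v : Fin q → ℝ) :
    frobNorm (vecMulVec u v) ^ 2 = (u ⬝ᵥ u) * (v ⬝ᵥ v) := by
  rw [frobNorm_sq, frobInner_vecMulVec, vecMulVec_mulVec]
  simp [dotProduct_smul, mul_comm]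

end Frobenius

section Contraction

variable {m n : Type*} [Fintype m] [Fintype n]

lemma dotProduct_self_nonneg (x : n → ℝ) : 0 ≤ x ⬝ᵥ x := by
  simpa using dotProduct_star_self_nonneg x

lemma sq_dotProduct_le (x y : n → ℝ) : (x ⬝ᵥ y) ^ 2 ≤ (x ⬝ᵥ x) * (y ⬝ᵥ y) := by
  simpa [dotProduct, sq] using Finset.sum_mul_sq_le_sq_mul_sq Finset.univ x y

lemma dotProduct_add_smul_self (x u : n → ℝ) (c : ℝ) :
    (x + c • u) ⬝ᵥ (x + c • u) = x ⬝ᵥ x + 2 * c * (u ⬝ᵥ x) + c ^ 2 * (u ⬝ᵥ u) := by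
  simp only [add_dotProduct, dotProduct_add, smul_dotProduct, dotProduct_smul, smul_eq_mul,
    dotProduct_comm x u]
  ring

def IsContraction (W : Matrix m n ℝ) : Prop :=
  ∀ x, W *ᵥ x ⬝ᵥ W *ᵥ x ≤ x ⬝ᵥ x

lemma isContraction_zero : IsContraction (0 : Matrix m n ℝ) := fun x => by
  simpa using dotProduct_self_nonneg x

lemma IsContraction.neg {W : Matrix m n ℝ} (hW : IsContraction W) : IsContraction (-W) :=
  fun x => by simpa [neg_mulVec] using hW x

variable [DecidableEq n]

lemma one_sub_vecMulVec_mulVec (u y : n → ℝ) :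
    (1 - vecMulVec u u) *ᵥ y = y - (u ⬝ᵥ y) • u := by
  simp [sub_mulVec, vecMulVec_mulVec]

lemma dotProduct_one_sub_vecMulVec_mulVec {u : n → ℝ} (hu : u ⬝ᵥ u = 1) (y : n → ℝ) :
    u ⬝ᵥ (1 - vecMulVec u u) *ᵥ y = 0 := by
  simp [one_sub_vecMulVec_mulVec, dotProduct_sub, dotProduct_smul, hu]

lemma one_sub_vecMulVec_mulVec_self {u : n → ℝ} (hu : u ⬝ᵥ u = 1) (y : n → ℝ) :
    (1 - vecMulVec u u) *ᵥ y ⬝ᵥ (1 - vecMulVec u u) *ᵥ y = y ⬝ᵥ y - (u ⬝ᵥ y) ^ 2 := by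
  rw [one_sub_vecMulVec_mulVec, sub_eq_add_neg, ← neg_smul, dotProduct_add_smul_self, hu]
  ring

lemma IsContraction.compress [DecidableEq m] {W : Matrix m n ℝ} (hW : IsContraction W)
    {u : m → ℝ} {v : n → ℝ} (hu : u ⬝ᵥ u = 1) (hv : v ⬝ᵥ v = 1) :
    IsContraction ((1 - vecMulVec u u) * W * (1 - vecMulVec v v) + vecMulVec u v) := by
  intro x
  set y := W *ᵥ (1 - vecMulVec v v) *ᵥ x
  have hsplit : ((1 - vecMulVec u u) * W * (1 - vecMulVec v v) + vecMulVec u v) *ᵥ x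
      = (1 - vecMulVec u u) *ᵥ y + (v ⬝ᵥ x) • u := by
    simp [y, add_mulVec, vecMulVec_mulVec, Matrix.mul_assoc]
  have hy : y ⬝ᵥ y ≤ x ⬝ᵥ x - (v ⬝ᵥ x) ^ 2 :=
    (hW _).trans (one_sub_vecMulVec_mulVec_self hv x).le
  rw [hsplit, dotProduct_add_smul_self, dotProduct_one_sub_vecMulVec_mulVec hu,
    one_sub_vecMulVec_mulVec_self hu, hu]
  nlinarith [sq_nonneg (u ⬝ᵥ y)]

end Contraction

section NuclearNorm

variable {p q : ℕ}

lemma IsContraction.frobNorm_le {W : Matrix (Fin p) (Fin q) ℝ} (hW : IsContraction W) :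
    frobNorm W ≤ √q := by
  have hcol : ∀ j, W.col j ⬝ᵥ W.col j ≤ 1 := fun j => by
    simpa [mulVec_single_one, single_dotProduct] using hW (Pi.single j 1)
  rw [frobNorm]
  refine Real.sqrt_le_sqrt ?_
  calc frobInner W W = ∑ j, W.col j ⬝ᵥ W.col j := by
        simp [frobInner, trace, mul_apply', dotProduct]
    _ ≤ ∑ _j : Fin q, (1 : ℝ) := Finset.sum_le_sum fun j _ => hcol j
    _ = q := by simp

/-- The nuclear norm, as the norm dual to the operator norm under the Frobenius pairing. -/
def nuclearNorm (X : Matrix (Fin p) (Fin q) ℝ) : ℝ :=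
  sSup (frobInner X '' {W | IsContraction W})

lemma bddAbove_frobInner_image (X : Matrix (Fin p) (Fin q) ℝ) :
    BddAbove (frobInner X '' {W | IsContraction W}) := by
  refine ⟨frobNorm X * √q, Set.forall_mem_image.2 fun W hW => ?_⟩
  exact (frobInner_le_frobNorm_mul X W).trans
    (mul_le_mul_of_nonneg_left (IsContraction.frobNorm_le hW) (frobNorm_nonneg X))

lemma le_nuclearNorm (X : Matrix (Fin p) (Fin q) ℝ) {W : Matrix (Fin p) (Fin q) ℝ}
    (hW : IsContraction W) : frobInner X W ≤ nuclearNorm X :=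
  le_csSup (bddAbove_frobInner_image X) ⟨W, hW, rfl⟩

lemma nuclearNorm_le {X : Matrix (Fin p) (Fin q) ℝ} {c : ℝ}
    (h : ∀ W, IsContraction W → frobInner X W ≤ c) : nuclearNorm X ≤ c :=
  csSup_le ⟨_, 0, isContraction_zero, rfl⟩ (Set.forall_mem_image.2 h)

lemma nuclearNorm_nonneg (X : Matrix (Fin p) (Fin q) ℝ) : 0 ≤ nuclearNorm X := by
  simpa [frobInner] using le_nuclearNorm X isContraction_zero

lemma nuclearNorm_le_sqrt_mul_frobNorm (X : Matrix (Fin p) (Fin q) ℝ) :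
    nuclearNorm X ≤ √q * frobNorm X :=
  nuclearNorm_le fun W hW => by
    rw [mul_comm]
    exact (frobInner_le_frobNorm_mul X W).trans
      (mul_le_mul_of_nonneg_left hW.frobNorm_le (frobNorm_nonneg X))

lemma nuclearNorm_sub_le (X Y : Matrix (Fin p) (Fin q) ℝ) :
    nuclearNorm (X - Y) ≤ nuclearNorm X + nuclearNorm Y :=
  nuclearNorm_le fun W hW => by
    rw [frobInner_sub_left, sub_eq_add_neg, ← frobInner_neg_right]
    exact add_le_add (le_nuclearNorm X hW) (le_nuclearNorm Y hW.neg)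

lemma nuclearNorm_sum_le {ι : Type*} (t : Finset ι) (F : ι → Matrix (Fin p) (Fin q) ℝ) :
    nuclearNorm (∑ i ∈ t, F i) ≤ ∑ i ∈ t, nuclearNorm (F i) :=
  nuclearNorm_le fun W hW => by
    rw [frobInner_sum_left]
    exact Finset.sum_le_sum fun i _ => le_nuclearNorm (F i) hW

lemma nuclearNorm_vecMulVec_le (a : Fin p → ℝ) (b : Fin q → ℝ) :
    nuclearNorm (vecMulVec a b) ≤ frobNorm (vecMulVec a b) :=
  nuclearNorm_le fun W hW => by
    rw [frobInner_comm, frobInner_vecMulVec]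
    refine le_of_abs_le (abs_le_of_sq_le_sq ?_ (frobNorm_nonneg _))
    rw [frobNorm_vecMulVec_sq]
    exact (sq_dotProduct_le a (W *ᵥ b)).trans
      (mul_le_mul_of_nonneg_left (hW b) (dotProduct_self_nonneg a))

/-- `R - σ u ⊗ v` is the compression of `R` to `u⊥ × v⊥`; compressing a contraction `W` and
adding `u ⊗ v` gives a contraction that pairs with `R` to `⟪R - σ u ⊗ v, W⟫ + σ`. -/
lemma nuclearNorm_sub_smul_vecMulVec_le {R : Matrix (Fin p) (Fin q) ℝ} {u : Fin p → ℝ}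
    {v : Fin q → ℝ} {σ : ℝ} (hu : u ⬝ᵥ u = 1) (hv : v ⬝ᵥ v = 1) (hRv : R *ᵥ v = σ • u)
    (hRu : Rᵀ *ᵥ u = σ • v) :
    nuclearNorm (R - σ • vecMulVec u v) ≤ nuclearNorm R - σ := by
  have hleft : (1 - vecMulVec u u) * R = R - σ • vecMulVec u v := by
    rw [Matrix.sub_mul, Matrix.one_mul, vecMulVec_mul, ← mulVec_transpose, hRu, vecMulVec_smul]
  have hright : (R - σ • vecMulVec u v) *ᵥ v = 0 := by
    simp [sub_mulVec, hRv, smul_mulVec, vecMulVec_mulVec, hv]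
  have hcompress : (1 - vecMulVec u u) * R * (1 - vecMulVec v v) = R - σ • vecMulVec u v := by
    rw [hleft, Matrix.mul_sub, Matrix.mul_one, mul_vecMulVec, hright, zero_vecMulVec, sub_zero]
  refine nuclearNorm_le fun W hW => ?_
  have h := le_nuclearNorm R (hW.compress hu hv)
  rw [frobInner_add_right, frobInner_mul_mul, transpose_sub, transpose_one, transpose_vecMulVec,
    transpose_sub, transpose_one, transpose_vecMulVec, hcompress, frobInner_vecMulVec, hRv,
    dotProduct_smul, hu, smul_eq_mul, mul_one] at h
  linarith

end NuclearNorm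

lemma sq_le_mul_of_forall_le {a b d : ℝ} (h : ∀ c : ℝ, 2 * c * a - c ^ 2 * b ≤ d) :
    a ^ 2 ≤ b * d := by
  have := discrim_le_zero (a := b) (b := -2 * a) (c := d) fun c => by nlinarith [h c]
  rw [discrim] at this
  linarith

section BestRankOne

variable {p q : ℕ}

def IsBestRankOne (R : Matrix (Fin p) (Fin q) ℝ) (r : Fin p → ℝ) (s : Fin q → ℝ) : Prop :=
  ∀ u v, frobNorm (R - vecMulVec r s) ≤ frobNorm (R - vecMulVec u v)

namespace IsBestRankOne

variable {R : Matrix (Fin p) (Fin q) ℝ} {r : Fin p → ℝ} {s : Fin q → ℝ}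

lemma two_mul_frobInner_sub_le (hb : IsBestRankOne R r s) (u : Fin p → ℝ) (v : Fin q → ℝ)
    (c : ℝ) :
    2 * c * frobInner R (vecMulVec u v) - c ^ 2 * frobNorm (vecMulVec u v) ^ 2
      ≤ 2 * frobInner R (vecMulVec r s) - frobNorm (vecMulVec r s) ^ 2 := by
  have h := pow_le_pow_left₀ (frobNorm_nonneg _) (hb (c • u) v) 2
  rw [frobNorm_sub_sq, frobNorm_sub_sq, smul_vecMulVec, frobInner_smul_right, frobNorm_smul,
    mul_pow, sq_abs] at h
  linarith

lemma frobInner_eq (hb : IsBestRankOne R r s) :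
    frobInner R (vecMulVec r s) = frobNorm (vecMulVec r s) ^ 2 := by
  have := sq_le_mul_of_forall_le (hb.two_mul_frobInner_sub_le r s)
  nlinarith [sq_nonneg (frobInner R (vecMulVec r s) - frobNorm (vecMulVec r s) ^ 2)]

lemma frobInner_sq_le (hb : IsBestRankOne R r s) (u : Fin p → ℝ) (v : Fin q → ℝ) :
    frobInner R (vecMulVec u v) ^ 2
      ≤ frobNorm (vecMulVec u v) ^ 2 * frobNorm (vecMulVec r s) ^ 2 :=
  sq_le_mul_of_forall_le fun c => by
    have := hb.two_mul_frobInner_sub_le u v c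
    rw [hb.frobInner_eq] at this
    linarith

lemma mulVec_self_le (hb : IsBestRankOne R r s) (v : Fin q → ℝ) :
    R *ᵥ v ⬝ᵥ R *ᵥ v ≤ frobNorm (vecMulVec r s) ^ 2 * (v ⬝ᵥ v) := by
  have h := hb.frobInner_sq_le (R *ᵥ v) v
  rw [frobInner_vecMulVec, frobNorm_vecMulVec_sq] at h
  rcases (dotProduct_self_nonneg (R *ᵥ v)).eq_or_lt with h0 | hpos
  · rw [← h0]
    exact mul_nonneg (sq_nonneg _) (dotProduct_self_nonneg v)
  · nlinarith

lemma eq_zero (hb : IsBestRankOne R r s) (ht : vecMulVec r s = 0) : R = 0 := by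
  refine ext_of_mulVec_single fun j => ?_
  have h := hb.mulVec_self_le (Pi.single j 1)
  rw [ht, frobNorm_eq_zero.2 rfl] at h
  rw [zero_mulVec, ← dotProduct_self_eq_zero]
  exact le_antisymm (by simpa using h) (dotProduct_self_nonneg _)

lemma mulVec_eq (hb : IsBestRankOne R r s) : R *ᵥ s = (s ⬝ᵥ s) • r := by
  have h1 := hb.mulVec_self_le s
  have h2 := hb.frobInner_eq
  rw [frobInner_vecMulVec] at h2
  rw [frobNorm_vecMulVec_sq] at h1 h2
  rw [← sub_eq_zero, ← dotProduct_self_eq_zero]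
  refine le_antisymm ?_ (dotProduct_self_nonneg _)
  rw [sub_eq_add_neg, ← neg_smul, dotProduct_add_smul_self, h2]
  nlinarith

lemma transpose (hb : IsBestRankOne R r s) : IsBestRankOne Rᵀ s r := fun u v => by
  have h (a : Fin p → ℝ) (b : Fin q → ℝ) :
      frobNorm (Rᵀ - vecMulVec b a) = frobNorm (R - vecMulVec a b) := by
    rw [← frobNorm_transpose, transpose_sub, transpose_transpose, transpose_vecMulVec]
  rw [h, h]
  exact hb v u

lemma frobNorm_vecMulVec_le (hb : IsBestRankOne R r s) :
    frobNorm (vecMulVec r s) ≤ frobNorm R := by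
  have h := frobInner_le_frobNorm_mul R (vecMulVec r s)
  rw [hb.frobInner_eq] at h
  nlinarith [frobNorm_nonneg R, frobNorm_nonneg (vecMulVec r s)]

lemma isContraction_inv_smul (hb : IsBestRankOne R r s) :
    IsContraction ((frobNorm (vecMulVec r s))⁻¹ • R) := fun x => by
  set T := frobNorm (vecMulVec r s)
  rw [smul_mulVec, smul_dotProduct, dotProduct_smul, smul_eq_mul, smul_eq_mul, ← mul_assoc,
    ← sq]
  rcases eq_or_ne T 0 with hT | hT
  · simpa [hT] using dotProduct_self_nonneg x
  · calc (T⁻¹) ^ 2 * (R *ᵥ x ⬝ᵥ R *ᵥ x) ≤ (T⁻¹) ^ 2 * (T ^ 2 * (x ⬝ᵥ x)) :=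
          mul_le_mul_of_nonneg_left (hb.mulVec_self_le x) (sq_nonneg _)
      _ = x ⬝ᵥ x := by field_simp

lemma frobNorm_sq_le (hb : IsBestRankOne R r s) :
    frobNorm R ^ 2 ≤ frobNorm (vecMulVec r s) * nuclearNorm R := by
  rcases (frobNorm_nonneg (vecMulVec r s)).eq_or_lt with hT | hT
  · rw [hb.eq_zero (frobNorm_eq_zero.1 hT.symm), frobNorm_eq_zero.2 rfl, sq, zero_mul]
    exact mul_nonneg hT.le (nuclearNorm_nonneg 0)
  · have h := le_nuclearNorm R hb.isContraction_inv_smul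
    rw [frobInner_smul_right, ← frobNorm_sq, inv_mul_le_iff₀ hT] at h
    exact h

lemma frobNorm_le_nuclearNorm (hb : IsBestRankOne R r s) : frobNorm R ≤ nuclearNorm R := by
  nlinarith [hb.frobNorm_sq_le, hb.frobNorm_vecMulVec_le, nuclearNorm_nonneg R,
    frobNorm_nonneg R, frobNorm_nonneg (vecMulVec r s)]

lemma nuclearNorm_le_mul_frobNorm (hb : IsBestRankOne R r s) :
    nuclearNorm R ≤ q * frobNorm (vecMulVec r s) := by
  have h : nuclearNorm R ^ 2 ≤ q * (frobNorm (vecMulVec r s) * nuclearNorm R) :=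
    calc nuclearNorm R ^ 2 ≤ (√q * frobNorm R) ^ 2 :=
          pow_le_pow_left₀ (nuclearNorm_nonneg R) (nuclearNorm_le_sqrt_mul_frobNorm R) 2
      _ = q * frobNorm R ^ 2 := by rw [mul_pow, Real.sq_sqrt (Nat.cast_nonneg q)]
      _ ≤ q * (frobNorm (vecMulVec r s) * nuclearNorm R) :=
          mul_le_mul_of_nonneg_left hb.frobNorm_sq_le (Nat.cast_nonneg q)
  nlinarith [nuclearNorm_nonneg R, mul_nonneg (Nat.cast_nonneg (α := ℝ) q)
    (frobNorm_nonneg (vecMulVec r s))]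

lemma nuclearNorm_sub_vecMulVec_le (hb : IsBestRankOne R r s) :
    nuclearNorm (R - vecMulVec r s) ≤ nuclearNorm R - frobNorm (vecMulVec r s) := by
  rcases eq_or_ne (vecMulVec r s) 0 with ht | ht
  · simp [hb.eq_zero ht, ht, frobNorm_eq_zero.2]
  have hr : r ≠ 0 := by rintro rfl; simp at ht
  have hs : s ≠ 0 := by rintro rfl; exact ht (by ext; simp [vecMulVec_apply])
  set α := √(r ⬝ᵥ r)
  set β := √(s ⬝ᵥ s)
  have hα : α ^ 2 = r ⬝ᵥ r := Real.sq_sqrt (dotProduct_self_nonneg r)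
  have hβ : β ^ 2 = s ⬝ᵥ s := Real.sq_sqrt (dotProduct_self_nonneg s)
  have hα0 : α ≠ 0 :=
    (Real.sqrt_ne_zero (dotProduct_self_nonneg r)).2 (dotProduct_self_eq_zero.not.2 hr)
  have hβ0 : β ≠ 0 :=
    (Real.sqrt_ne_zero (dotProduct_self_nonneg s)).2 (dotProduct_self_eq_zero.not.2 hs)
  have hu : α⁻¹ • r ⬝ᵥ α⁻¹ • r = 1 := by
    simp only [smul_dotProduct, dotProduct_smul, smul_eq_mul, ← hα]
    field_simp
  have hv : β⁻¹ • s ⬝ᵥ β⁻¹ • s = 1 := by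
    simp only [smul_dotProduct, dotProduct_smul, smul_eq_mul, ← hβ]
    field_simp
  have hRv : R *ᵥ β⁻¹ • s = (α * β) • α⁻¹ • r := by
    rw [mulVec_smul, hb.mulVec_eq, smul_smul, smul_smul, ← hβ]
    congr 1
    field_simp
  have hRu : Rᵀ *ᵥ α⁻¹ • r = (α * β) • β⁻¹ • s := by
    rw [mulVec_smul, hb.transpose.mulVec_eq, smul_smul, smul_smul, ← hα]
    congr 1
    field_simp
  have hσ : (α * β) • vecMulVec (α⁻¹ • r) (β⁻¹ • s) = vecMulVec r s := by
    rw [smul_vecMulVec, vecMulVec_smul, smul_smul, smul_smul]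
    convert one_smul ℝ (vecMulVec r s)
    field_simp
  have hT : frobNorm (vecMulVec r s) = α * β := by
    rw [← Real.sqrt_sq (frobNorm_nonneg _), frobNorm_vecMulVec_sq,
      Real.sqrt_mul (dotProduct_self_nonneg r)]
  simpa only [hσ, hT] using nuclearNorm_sub_smul_vecMulVec_le hu hv hRv hRu

end IsBestRankOne

end BestRankOne

section Atil

variable {p q M : ℕ} (A : Fin M → Matrix (Fin p) (Fin p) ℝ)
  (B : Fin M → Matrix (Fin q) (Fin q) ℝ)

lemma Atil_add (X Y : Matrix (Fin p) (Fin q) ℝ) :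
    Atil A B (X + Y) = Atil A B X + Atil A B Y := by
  simp only [Atil, Matrix.mul_add, Matrix.add_mul, Finset.sum_add_distrib]

lemma Atil_sub (X Y : Matrix (Fin p) (Fin q) ℝ) :
    Atil A B (X - Y) = Atil A B X - Atil A B Y := by
  simp only [Atil, Matrix.mul_sub, Matrix.sub_mul, Finset.sum_sub_distrib]

lemma Atil_smul (c : ℝ) (X : Matrix (Fin p) (Fin q) ℝ) : Atil A B (c • X) = c • Atil A B X := by
  simp only [Atil, Matrix.mul_smul, Matrix.smul_mul, Finset.smul_sum]

variable {A B} {κ : ℝ}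

lemma frobNorm_Atil_le
    (hκ : ∀ μ (g : Matrix (Fin p) (Fin q) ℝ), frobNorm (A μ * g * (B μ)ᵀ) ≤ κ * frobNorm g)
    (g : Matrix (Fin p) (Fin q) ℝ) :
    frobNorm (Atil A B g) ≤ M * κ * frobNorm g :=
  calc frobNorm (Atil A B g) ≤ ∑ μ, frobNorm (A μ * g * (B μ)ᵀ) := frobNorm_sum_le _ _
    _ ≤ ∑ _μ : Fin M, κ * frobNorm g := Finset.sum_le_sum fun μ _ => hκ μ g
    _ = M * κ * frobNorm g := by simp [mul_assoc]

lemma nuclearNorm_Atil_vecMulVec_le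
    (hκ : ∀ μ (g : Matrix (Fin p) (Fin q) ℝ), frobNorm (A μ * g * (B μ)ᵀ) ≤ κ * frobNorm g)
    (a : Fin p → ℝ) (b : Fin q → ℝ) :
    nuclearNorm (Atil A B (vecMulVec a b)) ≤ M * κ * frobNorm (vecMulVec a b) :=
  calc nuclearNorm (Atil A B (vecMulVec a b))
      ≤ ∑ μ, nuclearNorm (A μ * vecMulVec a b * (B μ)ᵀ) := nuclearNorm_sum_le _ _
    _ ≤ ∑ _μ : Fin M, κ * frobNorm (vecMulVec a b) := Finset.sum_le_sum fun μ _ => by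
        have hrank : A μ * vecMulVec a b * (B μ)ᵀ = vecMulVec (A μ *ᵥ a) (B μ *ᵥ b) := by
          rw [mul_vecMulVec, vecMulVec_mul, vecMul_transpose]
        calc nuclearNorm (A μ * vecMulVec a b * (B μ)ᵀ)
            ≤ frobNorm (A μ * vecMulVec a b * (B μ)ᵀ) := hrank ▸ nuclearNorm_vecMulVec_le _ _
          _ ≤ κ * frobNorm (vecMulVec a b) := hκ μ _
    _ = M * κ * frobNorm (vecMulVec a b) := by simp [mul_assoc]

lemma mul_frobNorm_le_frobNorm_add_Atil
    (hκ : ∀ μ (g : Matrix (Fin p) (Fin q) ℝ), frobNorm (A μ * g * (B μ)ᵀ) ≤ κ * frobNorm g)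
    (g : Matrix (Fin p) (Fin q) ℝ) :
    (1 - M * κ) * frobNorm g ≤ frobNorm (g + Atil A B g) := by
  have h := frobNorm_add_le (g + Atil A B g) (-Atil A B g)
  rw [add_neg_cancel_right, frobNorm_neg] at h
  linarith [frobNorm_Atil_le hκ g]

lemma existsUnique_add_Atil_eq
    (hκ : ∀ μ (g : Matrix (Fin p) (Fin q) ℝ), frobNorm (A μ * g * (B μ)ᵀ) ≤ κ * frobNorm g)
    (hMκ : M * κ < 1) (b : Matrix (Fin p) (Fin q) ℝ) :
    ∃! f : Matrix (Fin p) (Fin q) ℝ, f + Atil A B f = b := by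
  let L : Matrix (Fin p) (Fin q) ℝ →ₗ[ℝ] Matrix (Fin p) (Fin q) ℝ :=
    { toFun := fun g => g + Atil A B g
      map_add' := fun X Y => by simp only [Atil_add]; abel
      map_smul' := fun c X => by simp only [Atil_smul, smul_add, RingHom.id_apply] }
  have hinj : Function.Injective L := by
    refine (injective_iff_map_eq_zero L).2 fun g hg => frobNorm_eq_zero.1 ?_
    have h := mul_frobNorm_le_frobNorm_add_Atil hκ g
    rw [show g + Atil A B g = 0 from hg, frobNorm_eq_zero.2 rfl] at h
    nlinarith [frobNorm_nonneg g]
  obtain ⟨f, hf⟩ := LinearMap.injective_iff_surjective.1 hinj b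
  exact ⟨f, hf, fun g hg => hinj (hg.trans hf.symm)⟩

lemma IsBestRankOne.nuclearNorm_sub_sub_Atil_le {R : Matrix (Fin p) (Fin q) ℝ}
    {r : Fin p → ℝ} {s : Fin q → ℝ} (hb : IsBestRankOne R r s) (hq : 0 < q)
    (hκ : ∀ μ (g : Matrix (Fin p) (Fin q) ℝ), frobNorm (A μ * g * (B μ)ᵀ) ≤ κ * frobNorm g)
    (hMκ : M * κ ≤ 1) :
    nuclearNorm (R - vecMulVec r s - Atil A B (vecMulVec r s))
      ≤ (1 - (1 - M * κ) / q) * nuclearNorm R := by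
  have hsing : (1 - M * κ) / q * nuclearNorm R ≤ (1 - M * κ) * frobNorm (vecMulVec r s) := by
    rw [div_mul_eq_mul_div, div_le_iff₀ (Nat.cast_pos.2 hq)]
    have := mul_le_mul_of_nonneg_left hb.nuclearNorm_le_mul_frobNorm (sub_nonneg.2 hMκ)
    linarith
  have := nuclearNorm_sub_le (R - vecMulVec r s) (Atil A B (vecMulVec r s))
  linarith [hb.nuclearNorm_sub_vecMulVec_le, nuclearNorm_Atil_vecMulVec_le hκ r s]

lemma tendsto_nuclearNorm_residual_zero {R : ℕ → Matrix (Fin p) (Fin q) ℝ}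
    {r : ℕ → Fin p → ℝ} {s : ℕ → Fin q → ℝ} (hq : 0 < q)
    (hκ : ∀ μ (g : Matrix (Fin p) (Fin q) ℝ), frobNorm (A μ * g * (B μ)ᵀ) ≤ κ * frobNorm g)
    (hMκ0 : 0 ≤ M * κ) (hMκ : M * κ < 1) (hb : ∀ n, IsBestRankOne (R n) (r n) (s n))
    (hR : ∀ n, R (n + 1) = R n - vecMulVec (r n) (s n) - Atil A B (vecMulVec (r n) (s n))) :
    Tendsto (fun n => nuclearNorm (R n)) atTop (𝓝 0) := by
  have hq' : (1 : ℝ) ≤ q := Nat.one_le_cast.2 hq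
  have hγ0 : 0 ≤ 1 - (1 - M * κ) / q := by
    rw [sub_nonneg, div_le_one (by linarith)]
    linarith
  have hγ1 : 1 - (1 - M * κ) / q < 1 := sub_lt_self 1 (div_pos (by linarith) (by linarith))
  have hdecay (n : ℕ) : nuclearNorm (R n) ≤ (1 - (1 - M * κ) / q) ^ n * nuclearNorm (R 0) :=
    le_geom (u := fun n => nuclearNorm (R n)) hγ0 n fun k _ => by
      rw [hR]
      exact (hb k).nuclearNorm_sub_sub_Atil_le hq hκ hMκ.le
  refine squeeze_zero (fun n => nuclearNorm_nonneg _) hdecay ?_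
  simpa using (tendsto_pow_atTop_nhds_zero_of_lt_one hγ0 hγ1).mul_const _

end Atil

end PGD

open PGD

theorem stmt_13_general {p q M : ℕ} (hq : 1 ≤ q)
    (A : Fin M → Matrix (Fin p) (Fin p) ℝ) (B : Fin M → Matrix (Fin q) (Fin q) ℝ)
    (κ : ℝ) (hκ0 : 0 ≤ κ)
    (hκ : ∀ (μ : Fin M) (g : Matrix (Fin p) (Fin q) ℝ),
      frobNorm (A μ * g * (B μ)ᵀ) ≤ κ * frobNorm g)
    (hcond : 3 * M * κ < 1)
    (b : Matrix (Fin p) (Fin q) ℝ)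
    (f : ℕ → Matrix (Fin p) (Fin q) ℝ)
    (r : ℕ → EuclideanSpace ℝ (Fin p)) (s : ℕ → EuclideanSpace ℝ (Fin q))
    (hstep : ∀ n, f (n + 1) = f n + tensor (r n) (s n))
    (hbest : ∀ (n : ℕ) (u : EuclideanSpace ℝ (Fin p)) (v : EuclideanSpace ℝ (Fin q)),
      frobNorm ((b - f n - Atil A B (f n)) - tensor (r n) (s n))
        ≤ frobNorm ((b - f n - Atil A B (f n)) - tensor u v)) :
    (∃! fstar : Matrix (Fin p) (Fin q) ℝ, fstar + Atil A B fstar = b) ∧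
    (∀ fstar : Matrix (Fin p) (Fin q) ℝ, fstar + Atil A B fstar = b →
      Tendsto (fun n => frobNorm (f n - fstar)) atTop (𝓝 0)) := by
  have hMκ0 : 0 ≤ (M : ℝ) * κ := mul_nonneg (Nat.cast_nonneg M) hκ0
  have hMκ : (M : ℝ) * κ < 1 := by linarith
  refine ⟨existsUnique_add_Atil_eq hκ hMκ b, fun fstar hfstar => ?_⟩
  set R : ℕ → Matrix (Fin p) (Fin q) ℝ := fun n => b - f n - Atil A B (f n)
  have hR_best : ∀ n, IsBestRankOne (R n) (r n).ofLp (s n).ofLp := fun n u v =>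
    hbest n (WithLp.toLp 2 u) (WithLp.toLp 2 v)
  have hR_succ : ∀ n, R (n + 1) = R n - tensor (r n) (s n) - Atil A B (tensor (r n) (s n)) :=
    fun n => by
      simp only [R, hstep, Atil_add]
      abel
  have herr : ∀ n, frobNorm (f n - fstar) ≤ nuclearNorm (R n) / (1 - M * κ) := fun n => by
    have hR : R n = -(f n - fstar + Atil A B (f n - fstar)) := by
      simp only [R, ← hfstar, Atil_sub]
      abel
    rw [le_div_iff₀ (by linarith), mul_comm]
    calc (1 - M * κ) * frobNorm (f n - fstar) ≤ frobNorm (R n) := by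
          rw [hR, frobNorm_neg]; exact mul_frobNorm_le_frobNorm_add_Atil hκ _
      _ ≤ nuclearNorm (R n) := (hR_best n).frobNorm_le_nuclearNorm
  refine squeeze_zero (fun n => frobNorm_nonneg _) herr ?_
  simpa using (tendsto_nuclearNorm_residual_zero hq hκ hMκ0 hMκ hR_best hR_succ).div_const _

/-- Convergence of the fixed-point PGD algorithm (case (A1), discretized setting):
if `3Mκ < 1`, there is a unique `f⋆` with `f⋆ + Ã(f⋆) = b`, and every fixed-point
PGD sequence converges to it in the Frobenius norm. -/
theorem stmt_13 {p q M : ℕ} (hp : 1 ≤ p) (hq : 1 ≤ q) (hM : 1 ≤ M)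
    (A : Fin M → Matrix (Fin p) (Fin p) ℝ) (B : Fin M → Matrix (Fin q) (Fin q) ℝ)
    (κ : ℝ) (hκ0 : 0 ≤ κ)
    (hκ : ∀ (μ : Fin M) (g : Matrix (Fin p) (Fin q) ℝ),
      frobNorm (A μ * g * (B μ)ᵀ) ≤ κ * frobNorm g)
    (hcond : 3 * M * κ < 1)
    (b g₀ : Matrix (Fin p) (Fin q) ℝ)
    (f : ℕ → Matrix (Fin p) (Fin q) ℝ)
    (r : ℕ → EuclideanSpace ℝ (Fin p)) (s : ℕ → EuclideanSpace ℝ (Fin q))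
    (hf0 : f 0 = g₀)
    (hstep : ∀ n, f (n + 1) = f n + tensor (r n) (s n))
    (hbest : ∀ (n : ℕ) (u : EuclideanSpace ℝ (Fin p)) (v : EuclideanSpace ℝ (Fin q)),
      frobNorm ((b - f n - Atil A B (f n)) - tensor (r n) (s n))
        ≤ frobNorm ((b - f n - Atil A B (f n)) - tensor u v)) :
    (∃! fstar : Matrix (Fin p) (Fin q) ℝ, fstar + Atil A B fstar = b) ∧
    (∀ fstar : Matrix (Fin p) (Fin q) ℝ, fstar + Atil A B fstar = b →
      Tendsto (fun n => frobNorm (f n - fstar)) atTop (𝓝 0)) :=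
  stmt_13_general hq A B κ hκ0 hκ hcond b f r s hstep hbest

end
end

section
/- Optimality of the greedy (POD) decomposition: let b ∈ H and define a greedy sequence by f₀ = 0 and f_{n+1} = f_n + r_{n+1}⊗s_{n+1}, where (r_{n+1}, s_{n+1}) is a best rank-one approximation of b − f_n. Then for every n, f_n = Σ_{k=1}^n r_k⊗s_k is a best rank-n approximation of b: ‖b − f_n‖_F = min over all families (u_k, v_k)_{1≤k≤n} in ℝ^p × ℝ^q of ‖b − Σ_{k=1}^n u_k⊗v_k‖_F. -/
open Matrix Filter Topology

noncomputable section

/-!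
Write `R_j = b - f_j` for the greedy residuals, `C_j = R_jᵀ R_j` for their Gram matrices and
`σ_j = ‖r_j‖² ‖s_j‖²`. The first-order conditions of a best rank-one approximation,
`R_jᵀ r_j = ‖r_j‖² s_j` and `R_j s_j = ‖s_j‖² r_j`, show that `σ_j` bounds the quadratic form of
`C_j` and that `C_j = C_{j+1} + v vᵀ` with `v = ‖r_j‖ s_j`, `‖v‖² = σ_j` and `C_{j+1} v = 0`;
taking traces, `‖b - f_n‖² = ‖b‖² - Σ_{k<n} σ_k`.

Conversely, if `N = Σ_{k<n} u_k ⊗ v_k` and `P` is the orthogonal projection onto the span of the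
`v_k`, then `N P = N`, so `‖b - N‖² ≥ ‖(b - N)(1 - P)‖² = ‖b (1 - P)‖² = ‖b‖² - tr (C_0 P)`.
Peeling the rank-one pieces `v vᵀ` off `C_0` one at a time, and compressing `P` to the orthogonal
complement of each `v`, gives the Ky Fan bound `tr (C_0 P) ≤ Σ_{k<n} σ_k` since `tr P ≤ n`.
-/

namespace POD

section Matrices

variable {ι κ μ : Type*} [Fintype ι] [Fintype κ] [Fintype μ]

lemma dotProduct_self_nonneg (x : ι → ℝ) : 0 ≤ x ⬝ᵥ x :=
  Finset.sum_nonneg fun i _ => mul_self_nonneg (x i)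

lemma dotProduct_transpose_mul_self_mulVec (A : Matrix κ ι ℝ) (x : ι → ℝ) :
    x ⬝ᵥ (Aᵀ * A) *ᵥ x = (A *ᵥ x) ⬝ᵥ (A *ᵥ x) := by
  rw [← mulVec_mulVec, dotProduct_mulVec, ← mulVec_transpose, transpose_transpose]

lemma dotProduct_transpose_mulVec (R : Matrix κ ι ℝ) (x : ι → ℝ) (y : κ → ℝ) :
    x ⬝ᵥ Rᵀ *ᵥ y = y ⬝ᵥ R *ᵥ x := by
  rw [mulVec_transpose, dotProduct_comm, dotProduct_mulVec]

lemma trace_transpose_mul_mul_le (B : Matrix ι κ ℝ) {C : Matrix ι ι ℝ} {c : ℝ}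
    (hC : ∀ x, x ⬝ᵥ C *ᵥ x ≤ c * (x ⬝ᵥ x)) :
    (Bᵀ * C * B).trace ≤ c * (Bᵀ * B).trace := by
  have hBCB : (Bᵀ * C * B).trace = ∑ l, (fun i => B i l) ⬝ᵥ C *ᵥ fun i => B i l := by
    simp only [trace, diag, mul_apply, transpose_apply, dotProduct, mulVec, Finset.sum_mul,
      Finset.mul_sum]
    exact Finset.sum_congr rfl fun l _ => Finset.sum_comm.trans
      (Finset.sum_congr rfl fun i _ => Finset.sum_congr rfl fun j _ => by ring)
  have hBB : (Bᵀ * B).trace = ∑ l, (fun i => B i l) ⬝ᵥ fun i => B i l := rfl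
  rw [hBCB, hBB, Finset.mul_sum]
  exact Finset.sum_le_sum fun l _ => hC _

lemma trace_transpose_mul_vecMulVec_mul (B : Matrix ι κ ℝ) (u : ι → ℝ) :
    (Bᵀ * vecMulVec u u * B).trace = (Bᵀ *ᵥ u) ⬝ᵥ (Bᵀ *ᵥ u) := by
  rw [mul_vecMulVec, vecMulVec_mul, trace_vecMulVec, mulVec_transpose]

def IsContraction (A : Matrix κ ι ℝ) : Prop :=
  ∀ x, (A *ᵥ x) ⬝ᵥ (A *ᵥ x) ≤ x ⬝ᵥ x

lemma IsContraction.mul {A : Matrix κ ι ℝ} {A' : Matrix ι μ ℝ} (hA : IsContraction A)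
    (hA' : IsContraction A') : IsContraction (A * A') := fun x => by
  rw [← mulVec_mulVec]
  exact (hA _).trans (hA' x)

variable {P : Matrix ι ι ℝ}

lemma _root_.IsStarProjection.transpose_eq (hP : IsStarProjection P) : Pᵀ = P := by
  simpa [star_eq_conjTranspose, conjTranspose_eq_transpose_of_trivial] using
    hP.isSelfAdjoint.star_eq

lemma _root_.IsStarProjection.mulVec_dotProduct_mulVec (hP : IsStarProjection P) (x : ι → ℝ) :
    (P *ᵥ x) ⬝ᵥ (P *ᵥ x) = x ⬝ᵥ P *ᵥ x := by
  rw [← dotProduct_transpose_mul_self_mulVec, hP.transpose_eq, hP.isIdempotentElem.eq]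

lemma isStarProjection_vecMulVec_self {u : ι → ℝ} (hu : u ⬝ᵥ u = 1) :
    IsStarProjection (vecMulVec u u) where
  isIdempotentElem := by rw [IsIdempotentElem, vecMulVec_mul_vecMulVec, hu, one_smul]
  isSelfAdjoint := by
    rw [IsSelfAdjoint, star_eq_conjTranspose, conjTranspose_eq_transpose_of_trivial,
      transpose_vecMulVec]

variable [DecidableEq ι]

lemma _root_.IsStarProjection.isContraction (hP : IsStarProjection P) : IsContraction P :=
  fun x => by
    have h := hP.one_sub.mulVec_dotProduct_mulVec x ▸ dotProduct_self_nonneg ((1 - P) *ᵥ x)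
    rw [sub_mulVec, one_mulVec, dotProduct_sub] at h
    rw [hP.mulVec_dotProduct_mulVec]
    linarith

lemma isContraction_transpose_one_sub_vecMulVec_mul {u : ι → ℝ} (hu : u ⬝ᵥ u = 1)
    {B : Matrix ι κ ℝ} (hB : IsContraction Bᵀ) :
    IsContraction ((1 - vecMulVec u u) * B)ᵀ := by
  have hQ := (isStarProjection_vecMulVec_self hu).one_sub
  rw [transpose_mul, hQ.transpose_eq]
  exact hB.mul hQ.isContraction

omit [Fintype κ] in
lemma transpose_one_sub_vecMulVec_mul_mul {u : ι → ℝ} (B : Matrix ι κ ℝ)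
    {D : Matrix ι ι ℝ} (hDt : Dᵀ = D) (hDu : D *ᵥ u = 0) :
    ((1 - vecMulVec u u) * B)ᵀ * D * ((1 - vecMulVec u u) * B) = Bᵀ * D * B := by
  have hQD : (1 - vecMulVec u u) * D = D := by
    rw [Matrix.sub_mul, Matrix.one_mul, vecMulVec_mul, ← mulVec_transpose, hDt, hDu,
      vecMulVec_zero, sub_zero]
  have hDQ : D * (1 - vecMulVec u u) = D := by
    rw [Matrix.mul_sub, Matrix.mul_one, mul_vecMulVec, hDu, zero_vecMulVec, sub_zero]
  rw [transpose_mul, transpose_sub, transpose_one, transpose_vecMulVec, Matrix.mul_assoc Bᵀ, hQD,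
    ← Matrix.mul_assoc, Matrix.mul_assoc Bᵀ D, hDQ]

lemma trace_transpose_one_sub_vecMulVec_mul_self {u : ι → ℝ} (hu : u ⬝ᵥ u = 1)
    (B : Matrix ι κ ℝ) :
    (((1 - vecMulVec u u) * B)ᵀ * ((1 - vecMulVec u u) * B)).trace =
      (Bᵀ * B).trace - (Bᵀ *ᵥ u) ⬝ᵥ (Bᵀ *ᵥ u) := by
  have hQ := (isStarProjection_vecMulVec_self hu).one_sub
  rw [transpose_mul, hQ.transpose_eq, Matrix.mul_assoc, ← Matrix.mul_assoc _ _ B,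
    hQ.isIdempotentElem.eq, ← Matrix.mul_assoc, Matrix.mul_sub, Matrix.sub_mul, Matrix.mul_one,
    trace_sub, trace_transpose_mul_vecMulVec_mul]

end Matrices

section Frobenius

variable {p q : ℕ}

lemma frobInner_self_nonneg (A : Matrix (Fin p) (Fin q) ℝ) : 0 ≤ frobInner A A := by
  rw [frobInner]
  exact Finset.sum_nonneg fun j _ => dotProduct_self_nonneg fun i => A i j

lemma frobNorm_le_frobNorm_iff (A B : Matrix (Fin p) (Fin q) ℝ) :
    frobNorm A ≤ frobNorm B ↔ frobInner A A ≤ frobInner B B :=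
  Real.sqrt_le_sqrt_iff (frobInner_self_nonneg B)

lemma frobInner_sub_tensor_self (R : Matrix (Fin p) (Fin q) ℝ) (u : EuclideanSpace ℝ (Fin p))
    (v : EuclideanSpace ℝ (Fin q)) :
    frobInner (R - tensor u v) (R - tensor u v) = frobInner R R - 2 * (u.ofLp ⬝ᵥ R *ᵥ v.ofLp)
      + (u.ofLp ⬝ᵥ u.ofLp) * (v.ofLp ⬝ᵥ v.ofLp) := by
  have hT : tensor u v = vecMulVec u.ofLp v.ofLp := rfl
  unfold frobInner
  rw [hT, transpose_sub, Matrix.sub_mul, Matrix.mul_sub, Matrix.mul_sub, trace_sub, trace_sub,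
    trace_sub, transpose_vecMulVec, mul_vecMulVec, vecMulVec_mul, vecMulVec_mul_vecMulVec,
    trace_vecMulVec, trace_vecMulVec, trace_vecMulVec, mulVec_transpose, dotProduct_smul,
    smul_eq_mul, ← dotProduct_mulVec, dotProduct_comm v.ofLp, ← dotProduct_mulVec]
  ring

variable {P : Matrix (Fin q) (Fin q) ℝ} (hP : IsStarProjection P)
include hP

lemma frobInner_mul_self_of_isStarProjection (X : Matrix (Fin p) (Fin q) ℝ) :
    frobInner (X * P) (X * P) = (Xᵀ * X * P).trace := by
  rw [frobInner, transpose_mul, hP.transpose_eq, Matrix.mul_assoc, trace_mul_comm]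
  simp only [Matrix.mul_assoc, hP.isIdempotentElem.eq]

lemma frobInner_self_eq_add (X : Matrix (Fin p) (Fin q) ℝ) :
    frobInner X X = frobInner (X * P) (X * P) + frobInner (X * (1 - P)) (X * (1 - P)) := by
  rw [frobInner_mul_self_of_isStarProjection hP,
    frobInner_mul_self_of_isStarProjection hP.one_sub, Matrix.mul_sub, Matrix.mul_one, trace_sub,
    frobInner]
  ring

lemma frobInner_self_sub_le_frobInner_sub {X N : Matrix (Fin p) (Fin q) ℝ} (hN : N * P = N) :
    frobInner X X - frobInner (X * P) (X * P) ≤ frobInner (X - N) (X - N) := by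
  have hXN : (X - N) * (1 - P) = X * (1 - P) := by
    rw [Matrix.sub_mul, Matrix.mul_sub N, Matrix.mul_one, hN, sub_self, sub_zero]
  rw [frobInner_self_eq_add hP (X - N), hXN, frobInner_self_eq_add hP X]
  linarith [frobInner_self_nonneg ((X - N) * P)]

lemma tensor_mul_of_mulVec_eq (u : EuclideanSpace ℝ (Fin p)) {v : EuclideanSpace ℝ (Fin q)}
    (hv : P *ᵥ v.ofLp = v.ofLp) : tensor u v * P = tensor u v := by
  rw [show tensor u v = vecMulVec u.ofLp v.ofLp from rfl, vecMulVec_mul, ← mulVec_transpose,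
    hP.transpose_eq, hv]

end Frobenius

section BestRankOne

variable {p q : ℕ}

def IsBestRankOneApprox (R : Matrix (Fin p) (Fin q) ℝ) (r : EuclideanSpace ℝ (Fin p))
    (s : EuclideanSpace ℝ (Fin q)) : Prop :=
  ∀ u v, frobNorm (R - tensor r s) ≤ frobNorm (R - tensor u v)

namespace IsBestRankOneApprox

variable {R : Matrix (Fin p) (Fin q) ℝ} {r : EuclideanSpace ℝ (Fin p)}
  {s : EuclideanSpace ℝ (Fin q)} (h : IsBestRankOneApprox R r s)
include h

lemma le (u : EuclideanSpace ℝ (Fin p)) (v : EuclideanSpace ℝ (Fin q)) :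
    -2 * (r.ofLp ⬝ᵥ R *ᵥ s.ofLp) + (r.ofLp ⬝ᵥ r.ofLp) * (s.ofLp ⬝ᵥ s.ofLp) ≤
      -2 * (u.ofLp ⬝ᵥ R *ᵥ v.ofLp) + (u.ofLp ⬝ᵥ u.ofLp) * (v.ofLp ⬝ᵥ v.ofLp) := by
  have huv := (frobNorm_le_frobNorm_iff _ _).1 (h u v)
  rw [frobInner_sub_tensor_self, frobInner_sub_tensor_self] at huv
  linarith

lemma transpose : IsBestRankOneApprox Rᵀ s r := fun u v => by
  rw [frobNorm_le_frobNorm_iff, frobInner_sub_tensor_self, frobInner_sub_tensor_self,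
    dotProduct_transpose_mulVec, dotProduct_transpose_mulVec]
  linarith [h.le v u]

lemma vecMul_eq : r.ofLp ᵥ* R = (r.ofLp ⬝ᵥ r.ofLp) • s.ofLp := by
  rcases (dotProduct_self_nonneg r.ofLp).eq_or_lt with ha | ha
  · simp [dotProduct_self_eq_zero.1 ha.symm]
  -- compare with the best right factor `(r ⬝ᵥ r)⁻¹ • (r ᵥ* R)` for the left factor `r`
  have key := h.le r (WithLp.toLp 2 ((r.ofLp ⬝ᵥ r.ofLp)⁻¹ • (r.ofLp ᵥ* R)))
  simp only [dotProduct_mulVec r.ofLp R, dotProduct_smul, smul_dotProduct, smul_eq_mul] at key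
  generalize r.ofLp ⬝ᵥ r.ofLp = a at ha key ⊢
  generalize r.ofLp ᵥ* R = g at key ⊢
  have hrhs : a * (-2 * (a⁻¹ * (g ⬝ᵥ g)) + a * (a⁻¹ * (a⁻¹ * (g ⬝ᵥ g)))) = -(g ⬝ᵥ g) := by
    field_simp
    ring
  have hsq : (a • s.ofLp - g) ⬝ᵥ (a • s.ofLp - g) ≤ 0 := by
    have hkey := hrhs ▸ mul_le_mul_of_nonneg_left key ha.le
    simp only [dotProduct_sub, sub_dotProduct, dotProduct_smul, smul_dotProduct, smul_eq_mul,
      dotProduct_comm s.ofLp g]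
    linarith
  exact (sub_eq_zero.1 (dotProduct_self_eq_zero.1 (le_antisymm hsq
    (dotProduct_self_nonneg _)))).symm

lemma mulVec_eq : R *ᵥ s.ofLp = (s.ofLp ⬝ᵥ s.ofLp) • r.ofLp := by
  simpa [vecMul_transpose] using h.transpose.vecMul_eq

lemma dotProduct_mulVec_eq :
    r.ofLp ⬝ᵥ R *ᵥ s.ofLp = (r.ofLp ⬝ᵥ r.ofLp) * (s.ofLp ⬝ᵥ s.ofLp) := by
  rw [h.mulVec_eq, dotProduct_smul, smul_eq_mul, mul_comm]

lemma mulVec_dotProduct_mulVec_le (x : Fin q → ℝ) :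
    (R *ᵥ x) ⬝ᵥ (R *ᵥ x) ≤ (r.ofLp ⬝ᵥ r.ofLp) * (s.ofLp ⬝ᵥ s.ofLp) * (x ⬝ᵥ x) := by
  rcases (dotProduct_self_nonneg x).eq_or_lt with hx | hx
  · simp [dotProduct_self_eq_zero.1 hx.symm]
  -- compare with the rank-one matrix `(R x) ⊗ x / ‖x‖²`
  have key := h.le (WithLp.toLp 2 ((x ⬝ᵥ x)⁻¹ • (R *ᵥ x))) (WithLp.toLp 2 x)
  simp only [h.dotProduct_mulVec_eq, dotProduct_smul, smul_dotProduct, smul_eq_mul] at key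
  generalize x ⬝ᵥ x = c at hx key ⊢
  generalize (R *ᵥ x) ⬝ᵥ (R *ᵥ x) = y at key ⊢
  have hrhs : c * (-2 * (c⁻¹ * y) + c⁻¹ * (c⁻¹ * y) * c) = -y := by
    field_simp
    ring
  nlinarith [hrhs ▸ mul_le_mul_of_nonneg_left key hx.le]

lemma transpose_mul_self_sub_tensor :
    (R - tensor r s)ᵀ * (R - tensor r s) =
      Rᵀ * R - (r.ofLp ⬝ᵥ r.ofLp) • vecMulVec s.ofLp s.ofLp := by
  rw [show tensor r s = vecMulVec r.ofLp s.ofLp from rfl, transpose_sub, transpose_vecMulVec,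
    Matrix.sub_mul, Matrix.mul_sub, Matrix.mul_sub, mul_vecMulVec, vecMulVec_mul,
    vecMulVec_mul_vecMulVec, mulVec_transpose, h.vecMul_eq, smul_vecMulVec, vecMulVec_smul]
  abel

lemma sub_tensor_mulVec : (R - tensor r s) *ᵥ s.ofLp = 0 := by
  rw [sub_mulVec, h.mulVec_eq, show tensor r s = vecMulVec r.ofLp s.ofLp from rfl,
    vecMulVec_mulVec, op_smul_eq_smul, sub_self]

end IsBestRankOneApprox

end BestRankOne

section Deflation

variable {ι κ : Type*} [Fintype ι] [Fintype κ]

structure IsDeflation (C : ℕ → Matrix ι ι ℝ) (σ : ℕ → ℝ) : Prop where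
  transpose_eq : ∀ j, (C j)ᵀ = C j
  le : ∀ j x, x ⬝ᵥ C j *ᵥ x ≤ σ j * (x ⬝ᵥ x)
  peel : ∀ j, ∃ v, v ⬝ᵥ v = σ j ∧ C j = C (j + 1) + vecMulVec v v ∧ C (j + 1) *ᵥ v = 0

namespace IsDeflation

variable {C : ℕ → Matrix ι ι ℝ} {σ : ℕ → ℝ} (hC : IsDeflation C σ)
include hC

lemma nonneg (j : ℕ) : 0 ≤ σ j := by
  obtain ⟨v, hv, -⟩ := hC.peel j
  exact hv ▸ dotProduct_self_nonneg v

lemma antitone : Antitone σ := antitone_nat_of_succ_le fun j => by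
  obtain ⟨v, -, hCj, -⟩ := hC.peel j
  obtain ⟨w, hw, hCw, hCw0⟩ := hC.peel (j + 1)
  have heig : C (j + 1) *ᵥ w = σ (j + 1) • w := by
    rw [hCw, add_mulVec, hCw0, vecMulVec_mulVec, hw, zero_add, op_smul_eq_smul]
  have hmono : w ⬝ᵥ C (j + 1) *ᵥ w ≤ w ⬝ᵥ C j *ᵥ w := by
    rw [hCj, add_mulVec, dotProduct_add, vecMulVec_mulVec, op_smul_eq_smul, dotProduct_smul,
      smul_eq_mul, dotProduct_comm w v]
    linarith [mul_self_nonneg (v ⬝ᵥ w)]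
  rw [heig, dotProduct_smul, smul_eq_mul, hw] at hmono
  nlinarith [hC.le j w, hC.nonneg j, hC.nonneg (j + 1)]

lemma trace_succ (j : ℕ) : (C (j + 1)).trace = (C j).trace - σ j := by
  obtain ⟨v, hv, hCj, -⟩ := hC.peel j
  rw [hCj, trace_add, trace_vecMulVec, hv, add_sub_cancel_right]

lemma trace_eq_sub_sum (n : ℕ) : (C n).trace = (C 0).trace - ∑ k ∈ Finset.range n, σ k := by
  induction n with
  | zero => simp
  | succ n ih => rw [hC.trace_succ, ih, Finset.sum_range_succ, sub_add_eq_sub_sub]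

variable [DecidableEq ι]

lemma exists_compression (j : ℕ) {B : Matrix ι κ ℝ} (hB : IsContraction Bᵀ) :
    ∃ B' : Matrix ι κ ℝ, IsContraction B'ᵀ ∧ ∃ β, 0 ≤ β ∧ β ≤ 1 ∧
      (Bᵀ * C j * B).trace = (B'ᵀ * C (j + 1) * B').trace + σ j * β ∧
      (B'ᵀ * B').trace = (Bᵀ * B).trace - β := by
  obtain ⟨v, hv, hCj, hCv⟩ := hC.peel j
  rcases (hC.nonneg j).eq_or_lt with h0 | hpos
  · have hv0 : v = 0 := dotProduct_self_eq_zero.1 (hv.trans h0.symm)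
    refine ⟨B, hB, 0, le_rfl, zero_le_one, ?_, by rw [sub_zero]⟩
    rw [hCj, hv0, zero_vecMulVec, add_zero, mul_zero, add_zero]
  set u := (√(σ j))⁻¹ • v
  have hsqrt : √(σ j) * √(σ j) = σ j := Real.mul_self_sqrt hpos.le
  have hu : u ⬝ᵥ u = 1 := by
    rw [dotProduct_smul, smul_dotProduct, hv, smul_eq_mul, smul_eq_mul, ← mul_assoc, ← mul_inv,
      hsqrt, inv_mul_cancel₀ hpos.ne']
  have hvv : vecMulVec v v = σ j • vecMulVec u u := by
    rw [smul_vecMulVec, vecMulVec_smul, smul_smul, smul_smul, mul_assoc, ← mul_inv, hsqrt,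
      mul_inv_cancel₀ hpos.ne', one_smul]
  have hCu : C (j + 1) *ᵥ u = 0 := by rw [mulVec_smul, hCv, smul_zero]
  refine ⟨(1 - vecMulVec u u) * B, isContraction_transpose_one_sub_vecMulVec_mul hu hB,
    (Bᵀ *ᵥ u) ⬝ᵥ (Bᵀ *ᵥ u), dotProduct_self_nonneg _, hu ▸ hB u, ?_,
    trace_transpose_one_sub_vecMulVec_mul_self hu B⟩
  rw [transpose_one_sub_vecMulVec_mul_mul B (hC.transpose_eq _) hCu, hCj, hvv,
    Matrix.mul_add, Matrix.add_mul, trace_add, Matrix.mul_smul, Matrix.smul_mul, trace_smul,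
    trace_transpose_mul_vecMulVec_mul, smul_eq_mul]

/-- A Ky Fan-type bound: `Bᵀ` being a contraction, the mass `tr (Bᵀ B)` is best spent on the
first `n` values of `σ`, the excess at the rate `σ (j + n)`. -/
theorem trace_transpose_mul_mul_le_sum (n : ℕ) :
    ∀ j (B : Matrix ι κ ℝ), IsContraction Bᵀ →
      (Bᵀ * C j * B).trace ≤
        ∑ k ∈ Finset.range n, σ (j + k) + ((Bᵀ * B).trace - n) * σ (j + n) := by
  induction n with
  | zero =>
    intro j B _
    simpa [mul_comm] using trace_transpose_mul_mul_le B (hC.le j)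
  | succ n ih =>
    intro j B hB
    obtain ⟨B', hB', β, hβ0, hβ1, htr, htr'⟩ := hC.exists_compression j hB
    have hanti : σ (j + (n + 1)) ≤ σ j := hC.antitone (Nat.le_add_right j _)
    have hsum : ∑ k ∈ Finset.range n, σ (j + 1 + k) = ∑ k ∈ Finset.range n, σ (j + (k + 1)) :=
      Finset.sum_congr rfl fun k _ => by rw [add_right_comm, add_assoc]
    have hIH := ih (j + 1) B' hB'
    rw [htr', hsum, add_right_comm, add_assoc] at hIH
    rw [htr, Finset.sum_range_succ', add_zero]
    push_cast
    nlinarith [mul_nonneg (sub_nonneg.2 hβ1) (sub_nonneg.2 hanti)]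

lemma trace_mul_le_sum {P : Matrix ι ι ℝ} (hP : IsStarProjection P) {n : ℕ}
    (htr : P.trace ≤ n) :
    (C 0 * P).trace ≤ ∑ k ∈ Finset.range n, σ k := by
  have hPc : IsContraction Pᵀ := hP.transpose_eq ▸ hP.isContraction
  have h := hC.trace_transpose_mul_mul_le_sum n 0 P hPc
  rw [hP.transpose_eq, hP.isIdempotentElem.eq, Matrix.mul_assoc, trace_mul_comm,
    Matrix.mul_assoc, hP.isIdempotentElem.eq] at h
  simp only [zero_add] at h
  nlinarith [hC.nonneg n]

end IsDeflation

end Deflation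

lemma exists_isStarProjection_trace_le {ι κ : Type*} [Fintype ι] [DecidableEq ι] [Fintype κ]
    (v : κ → EuclideanSpace ℝ ι) :
    ∃ P : Matrix ι ι ℝ, IsStarProjection P ∧ P.trace ≤ Fintype.card κ ∧
      ∀ k, P *ᵥ (v k).ofLp = (v k).ofLp := by
  set K := Submodule.span ℝ (Set.range v)
  set e := (toEuclideanCLM (n := ι) (𝕜 := ℝ)).symm
  have hP : toEuclideanCLM (𝕜 := ℝ) (e K.starProjection) = K.starProjection := by simp [e]
  refine ⟨e K.starProjection, isStarProjection_starProjection.map e.toStarAlgHom, ?_,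
    fun k => ?_⟩
  · have hidem : IsIdempotentElem K.starProjection.toLinearMap :=
      LinearMap.ext fun x => DFunLike.congr_fun K.isIdempotentElem_starProjection.eq x
    have htr := ((LinearMap.isProj_range_iff_isIdempotentElem _).2 hidem).trace
    rw [Submodule.range_starProjection, ← hP, coe_toEuclideanCLM_eq_toEuclideanLin,
      toEuclideanLin_eq_toLin_orthonormal, trace_toLin_eq] at htr
    rw [htr]
    exact_mod_cast (finrank_span_le_card (Set.range v)).trans
      ((Set.toFinset_range v).symm ▸ Finset.card_image_le)
  · have hvk := congrArg WithLp.ofLp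
      (Submodule.starProjection_eq_self_iff.2 (Submodule.subset_span ⟨k, rfl⟩ : v k ∈ K))
    rwa [← hP, ofLp_toEuclideanCLM] at hvk

lemma isDeflation_transpose_mul_self_residual {p q : ℕ} {b : Matrix (Fin p) (Fin q) ℝ}
    {f : ℕ → Matrix (Fin p) (Fin q) ℝ} {r : ℕ → EuclideanSpace ℝ (Fin p)}
    {s : ℕ → EuclideanSpace ℝ (Fin q)} (hstep : ∀ n, f (n + 1) = f n + tensor (r n) (s n))
    (hbest : ∀ n, IsBestRankOneApprox (b - f n) (r n) (s n)) :
    IsDeflation (fun n => (b - f n)ᵀ * (b - f n))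
      (fun n => ((r n).ofLp ⬝ᵥ (r n).ofLp) * ((s n).ofLp ⬝ᵥ (s n).ofLp)) where
  transpose_eq j := by rw [transpose_mul, transpose_transpose]
  le j x := by
    rw [dotProduct_transpose_mul_self_mulVec]
    exact (hbest j).mulVec_dotProduct_mulVec_le x
  peel j := by
    have hres : b - f (j + 1) = b - f j - tensor (r j) (s j) := by
      rw [hstep, sub_add_eq_sub_sub]
    have hsqrt := Real.mul_self_sqrt (dotProduct_self_nonneg (r j).ofLp)
    refine ⟨√((r j).ofLp ⬝ᵥ (r j).ofLp) • (s j).ofLp, ?_, ?_, ?_⟩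
    · rw [dotProduct_smul, smul_dotProduct, smul_eq_mul, smul_eq_mul, ← mul_assoc, hsqrt]
    · rw [hres, (hbest j).transpose_mul_self_sub_tensor, smul_vecMulVec, vecMulVec_smul,
        smul_smul, hsqrt, sub_add_cancel]
    · rw [hres, mulVec_smul, ← mulVec_mulVec, (hbest j).sub_tensor_mulVec, mulVec_zero,
        smul_zero]

end POD

open POD

theorem stmt_15_general {p q : ℕ}
    (b : Matrix (Fin p) (Fin q) ℝ)
    (f : ℕ → Matrix (Fin p) (Fin q) ℝ)
    (r : ℕ → EuclideanSpace ℝ (Fin p)) (s : ℕ → EuclideanSpace ℝ (Fin q))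
    (hf0 : f 0 = 0)
    (hstep : ∀ n, f (n + 1) = f n + tensor (r n) (s n))
    (hbest : ∀ (n : ℕ) (u : EuclideanSpace ℝ (Fin p)) (v : EuclideanSpace ℝ (Fin q)),
      frobNorm ((b - f n) - tensor (r n) (s n)) ≤ frobNorm ((b - f n) - tensor u v)) :
    ∀ n : ℕ,
      IsLeast {t : ℝ | ∃ (u : Fin n → EuclideanSpace ℝ (Fin p))
          (v : Fin n → EuclideanSpace ℝ (Fin q)),
          t = frobNorm (b - ∑ k, tensor (u k) (v k))}
        (frobNorm (b - f n)) := by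
  intro n
  have hC := isDeflation_transpose_mul_self_residual hstep hbest
  have hfn : ∑ k : Fin n, tensor (r k) (s k) = f n := by
    rw [Fin.sum_univ_eq_sum_range (fun k => tensor (r k) (s k))]
    exact Finset.sum_range_induction _ _ hf0 n fun k _ => hstep k
  refine ⟨⟨fun k => r k, fun k => s k, by rw [hfn]⟩, ?_⟩
  rintro _ ⟨u, v, rfl⟩
  obtain ⟨P, hP, htr, hPv⟩ := exists_isStarProjection_trace_le v
  have hN : (∑ k, tensor (u k) (v k)) * P = ∑ k, tensor (u k) (v k) := by
    rw [Matrix.sum_mul]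
    exact Finset.sum_congr rfl fun k _ => tensor_mul_of_mulVec_eq hP _ (hPv k)
  have hres := hC.trace_eq_sub_sum n
  have hKyFan := hC.trace_mul_le_sum hP (by simpa using htr)
  have hproj := frobInner_self_sub_le_frobInner_sub (X := b) hP hN
  rw [frobInner_mul_self_of_isStarProjection hP] at hproj
  simp only [hf0, sub_zero] at hres hKyFan
  rw [frobNorm_le_frobNorm_iff]
  unfold frobInner at hproj ⊢
  linarith

/-- Optimality of the greedy (POD) decomposition: the greedy sequence
`f_n = Σ_{k<n} r_k ⊗ s_k` obtained by successive best rank-one approximations of the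
residual is a best rank-`n` approximation of `b`. -/
theorem stmt_15 {p q : ℕ} (hp : 1 ≤ p) (hq : 1 ≤ q)
    (b : Matrix (Fin p) (Fin q) ℝ)
    (f : ℕ → Matrix (Fin p) (Fin q) ℝ)
    (r : ℕ → EuclideanSpace ℝ (Fin p)) (s : ℕ → EuclideanSpace ℝ (Fin q))
    (hf0 : f 0 = 0)
    (hstep : ∀ n, f (n + 1) = f n + tensor (r n) (s n))
    (hbest : ∀ (n : ℕ) (u : EuclideanSpace ℝ (Fin p)) (v : EuclideanSpace ℝ (Fin q)),
      frobNorm ((b - f n) - tensor (r n) (s n)) ≤ frobNorm ((b - f n) - tensor u v)) :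
    ∀ n : ℕ,
      IsLeast {t : ℝ | ∃ (u : Fin n → EuclideanSpace ℝ (Fin p))
          (v : Fin n → EuclideanSpace ℝ (Fin q)),
          t = frobNorm (b - ∑ k, tensor (u k) (v k))}
        (frobNorm (b - f n)) :=
  stmt_15_general b f r s hf0 hstep hbest
end
end
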